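/- There is an absolute constant C > 0 with the following property. Let X = (ℝ^d, ‖·‖_X) be any normed space and let T₂(X) denote its type-2 constant. Then for every real t with 0 < t < T₂(X), there exist n ∈ ℕ and vectors x₁, …, x_n ∈ ℝ^d with 1 ≤ ‖xᵢ‖_X ≤ 2 for every i ∈ [n], such that (𝔼_{ε∼Unif{−1,1}^n} ‖Σᵢ εᵢxᵢ‖_X²)^{1/2} ≥ (t/C)·(Σᵢ ‖xᵢ‖_X²)^{1/2}. -/

import Mathlib

open Finset

/-- `sgn b` is the real sign `±1` encoded by a Boolean. -/
noncomputable def sgn (b : Bool) : ℝ := if b then 1 else -1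

lemma sgn_not (b : Bool) : sgn (!b) = - sgn b := by cases b <;> simp [sgn]

/-- Sum of signs of a Boolean vector. -/
noncomputable def Sr (m : ℕ) (β : Fin m → Bool) : ℝ := ∑ j, sgn (β j)

/-- `T_m = Σ_β |S(β)|`, i.e. `2^m · E|ε₁+⋯+ε_m|`. -/
noncomputable def Tm (m : ℕ) : ℝ := ∑ β : Fin m → Bool, |Sr m β|

/-- The sign-flip involution. -/
def negB (m : ℕ) : (Fin m → Bool) ≃ (Fin m → Bool) where
  toFun β := fun j => !(β j)
  invFun β := fun j => !(β j)
  left_inv β := by funext j; simp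
  right_inv β := by funext j; simp

lemma Sr_negB (m : ℕ) (β : Fin m → Bool) : Sr m (negB m β) = - Sr m β := by
  simp only [Sr, negB, Equiv.coe_fn_mk, sgn_not, Finset.sum_neg_distrib]

lemma Sr_cons (m : ℕ) (b : Bool) (β : Fin m → Bool) :
    Sr (m + 1) (Fin.cons b β) = sgn b + Sr m β := by
  simp [Sr, Fin.sum_univ_succ]

lemma card_bool_fun (m : ℕ) : (Fintype.card (Fin m → Bool)) = 2 ^ m := by
  simp

lemma sum_piFinSucc (m : ℕ) (f : (Fin (m+1) → Bool) → ℝ) :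
    ∑ β : Fin (m+1) → Bool, f β = ∑ b : Bool, ∑ β : Fin m → Bool, f (Fin.cons b β) := by
  have h1 : ∑ β : Fin (m+1) → Bool, f β
      = ∑ p : Bool × (Fin m → Bool), f (Fin.cons p.1 p.2) := by
    refine Fintype.sum_equiv (Fin.consEquiv fun _ => Bool).symm _ _ ?_
    intro β
    congr 1
    funext j
    refine Fin.cases ?_ ?_ j <;> simp [Fin.consEquiv, Fin.tail]
  rw [h1, Fintype.sum_prod_type]

lemma M2 (m : ℕ) : ∑ β : Fin m → Bool, (Sr m β) ^ 2 = m * 2 ^ m := by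
  induction m with
  | zero => simp [Sr]
  | succ m ih =>
      rw [sum_piFinSucc]
      simp only [Sr_cons, Fintype.sum_bool]
      rw [← Finset.sum_add_distrib]
      have h : ∀ β : Fin m → Bool,
          (sgn true + Sr m β) ^ 2 + (sgn false + Sr m β) ^ 2
            = 2 * (Sr m β) ^ 2 + 2 := by
        intro β; simp [sgn]; ring
      rw [Finset.sum_congr rfl fun β _ => h β, Finset.sum_add_distrib,
        ← Finset.mul_sum, ih, Finset.sum_const, Finset.card_univ, card_bool_fun]
      push_cast
      ring

lemma M4 (m : ℕ) :
    ∑ β : Fin m → Bool, (Sr m β) ^ 4 = (3 * (m:ℝ) ^ 2 - 2 * m) * 2 ^ m := by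
  induction m with
  | zero => simp [Sr]
  | succ m ih =>
      rw [sum_piFinSucc]
      simp only [Sr_cons, Fintype.sum_bool]
      rw [← Finset.sum_add_distrib]
      have h : ∀ β : Fin m → Bool,
          (sgn true + Sr m β) ^ 4 + (sgn false + Sr m β) ^ 4
            = 2 * (Sr m β) ^ 4 + 12 * (Sr m β) ^ 2 + 2 := by
        intro β; simp [sgn]; ring
      rw [Finset.sum_congr rfl fun β _ => h β, Finset.sum_add_distrib,
        Finset.sum_add_distrib, ← Finset.mul_sum, ← Finset.mul_sum, ih, M2,
        Finset.sum_const, Finset.card_univ, card_bool_fun]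
      push_cast
      ring

noncomputable def Bpos (m : ℕ) : Finset (Fin m → Bool) :=
  Finset.univ.filter fun β => 0 < Sr m β

noncomputable def Bneg (m : ℕ) : Finset (Fin m → Bool) :=
  Finset.univ.filter fun β => ¬ 0 < Sr m β

lemma mem_Bpos {m : ℕ} {β : Fin m → Bool} : β ∈ Bpos m ↔ 0 < Sr m β := by
  simp [Bpos]

lemma mem_Bneg {m : ℕ} {β : Fin m → Bool} : β ∈ Bneg m ↔ ¬ 0 < Sr m β := by
  simp [Bneg]

lemma sum_split {m : ℕ} (f : (Fin m → Bool) → ℝ) :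
    ∑ β : Fin m → Bool, f β = ∑ β ∈ Bpos m, f β + ∑ β ∈ Bneg m, f β :=
  (Finset.sum_filter_add_sum_filter_not Finset.univ _ f).symm

lemma Sr_ne_zero {m : ℕ} (hm : Odd m) (β : Fin m → Bool) : Sr m β ≠ 0 := by
  classical
  set k := (Finset.univ.filter fun j : Fin m => β j = true).card with hk
  set k' := (Finset.univ.filter fun j : Fin m => ¬ β j = true).card with hk'
  have hsum : Sr m β = (k : ℝ) - k' := by
    rw [Sr, ← Finset.sum_filter_add_sum_filter_not Finset.univ (fun j => β j = true)]
    have e1 : ∀ j ∈ Finset.univ.filter fun j : Fin m => β j = true, sgn (β j) = 1 := by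
      intro j hj
      rw [Finset.mem_filter] at hj
      simp [sgn, hj.2]
    have e2 : ∀ j ∈ Finset.univ.filter fun j : Fin m => ¬ β j = true, sgn (β j) = -1 := by
      intro j hj
      rw [Finset.mem_filter] at hj
      simp only [Bool.not_eq_true] at hj
      simp [sgn, hj.2]
    rw [Finset.sum_congr rfl e1, Finset.sum_congr rfl e2, Finset.sum_const,
      Finset.sum_const, ← hk, ← hk', nsmul_eq_mul, nsmul_eq_mul, mul_one]
    ring
  have hcard : k + k' = m := by
    rw [hk, hk', Finset.card_filter_add_card_filter_not, Finset.card_univ,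
      Fintype.card_fin]
  intro h0
  have : (k : ℝ) = k' := by linarith [hsum ▸ h0]
  have hkk : k = k' := by exact_mod_cast this
  rw [hkk] at hcard
  exact (Nat.not_even_iff_odd.mpr hm) ⟨k', by omega⟩

lemma sum_Bneg {m : ℕ} (hm : Odd m) (g : ℝ → ℝ) :
    ∑ β ∈ Bneg m, g (Sr m β) = ∑ β ∈ Bpos m, g (- Sr m β) := by
  refine Finset.sum_bij' (fun β _ => negB m β) (fun β _ => negB m β) ?_ ?_ ?_ ?_ ?_
  · intro β hβ
    rw [mem_Bneg] at hβ
    rw [mem_Bpos, Sr_negB]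
    have := Sr_ne_zero hm β
    push_neg at hβ
    rcases lt_or_eq_of_le hβ with h | h
    · linarith
    · exact absurd h.symm (Ne.symm this)
  · intro β hβ
    rw [mem_Bpos] at hβ
    rw [mem_Bneg, Sr_negB]
    linarith
  · intro β _; exact (negB m).symm_apply_apply β
  · intro β _; exact (negB m).symm_apply_apply β
  · intro β hβ
    rw [Sr_negB, neg_neg]

lemma card_Bpos {m : ℕ} (hm : Odd m) : 2 * ((Bpos m).card : ℝ) = 2 ^ m := by
  have h1 : ∑ β ∈ Bneg m, (1 : ℝ) = ∑ β ∈ Bpos m, (1 : ℝ) := by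
    simpa using sum_Bneg hm (fun _ => (1 : ℝ))
  have h2 : ((Bneg m).card : ℝ) = ((Bpos m).card : ℝ) := by
    simpa using h1
  have h3 : (Bpos m).card + (Bneg m).card = 2 ^ m := by
    rw [Bpos, Bneg, Finset.card_filter_add_card_filter_not, Finset.card_univ,
      card_bool_fun]
  have h4 : ((Bpos m).card : ℝ) + ((Bneg m).card : ℝ) = 2 ^ m := by exact_mod_cast h3
  linarith

lemma sum_Sr_Bpos {m : ℕ} (hm : Odd m) : 2 * ∑ β ∈ Bpos m, Sr m β = Tm m := by
  have h0 : Tm m = ∑ β ∈ Bpos m, |Sr m β| + ∑ β ∈ Bneg m, |Sr m β| := sum_split _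
  have h1 : ∑ β ∈ Bneg m, |Sr m β| = ∑ β ∈ Bpos m, |Sr m β| := by
    simpa using sum_Bneg hm (fun s => |s|)
  have h2 : ∀ β ∈ Bpos m, |Sr m β| = Sr m β := fun β hβ => abs_of_pos (mem_Bpos.mp hβ)
  rw [h0, h1, Finset.sum_congr rfl h2]
  ring

lemma sum_Sr_Bneg {m : ℕ} (hm : Odd m) : ∑ β ∈ Bneg m, Sr m β = -(Tm m / 2) := by
  have h1 : ∑ β ∈ Bneg m, Sr m β = ∑ β ∈ Bpos m, (- Sr m β) := sum_Bneg hm id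
  rw [h1, Finset.sum_neg_distrib]
  have := sum_Sr_Bpos hm
  linarith

lemma Bpos_nonempty {m : ℕ} (hm : Odd m) : (Bpos m).Nonempty := by
  rw [← Finset.card_pos]
  have := card_Bpos hm
  by_contra h
  push_neg at h
  have h0 : (Bpos m).card = 0 := by omega
  rw [h0] at this
  have h2 : (0:ℝ) < 2 ^ m := by positivity
  simp at this
  linarith

lemma Tm_pos {m : ℕ} (hm : Odd m) : 0 < Tm m := by
  rw [← sum_Sr_Bpos hm]
  have : 0 < ∑ β ∈ Bpos m, Sr m β :=
    Finset.sum_pos (fun β hβ => mem_Bpos.mp hβ) (Bpos_nonempty hm)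
  linarith

lemma Tm_sq_le (m : ℕ) : Tm m ^ 2 ≤ m * 4 ^ m := by
  have cs := Finset.sum_mul_sq_le_sq_mul_sq Finset.univ
    (fun β : Fin m → Bool => |Sr m β|) (fun _ => (1 : ℝ))
  simp only [mul_one, one_pow, sq_abs, Finset.sum_const, Finset.card_univ,
    card_bool_fun, nsmul_eq_mul, mul_one, M2] at cs
  push_cast at cs
  have h4 : ((2 : ℝ) ^ m) * (2 ^ m) = 4 ^ m := by
    rw [← mul_pow]; norm_num
  calc Tm m ^ 2 = (∑ β : Fin m → Bool, |Sr m β|) ^ 2 := rfl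
    _ ≤ (m : ℝ) * 2 ^ m * 2 ^ m := cs
    _ = m * 4 ^ m := by rw [mul_assoc, h4]

lemma Tm_sq_ge {m : ℕ} (hm : 0 < m) : (m : ℝ) * 4 ^ m / 3 ≤ Tm m ^ 2 := by
  set M : ℝ := (m : ℝ) with hM
  have hM1 : 1 ≤ M := by
    rw [hM]
    exact_mod_cast hm
  set Q : ℝ := (2 : ℝ) ^ m with hQ
  have hQpos : 0 < Q := by positivity
  have habs : ∀ β : Fin m → Bool, (0:ℝ) ≤ |Sr m β| := fun β => abs_nonneg _
  -- CS 1 : (Σ S²)² ≤ T · Σ|S|³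
  have cs1 := Finset.sum_mul_sq_le_sq_mul_sq Finset.univ
    (fun β : Fin m → Bool => Real.sqrt |Sr m β|)
    (fun β : Fin m → Bool => |Sr m β| * Real.sqrt |Sr m β|)
  have e1 : ∀ β : Fin m → Bool,
      Real.sqrt |Sr m β| * (|Sr m β| * Real.sqrt |Sr m β|) = Sr m β ^ 2 := by
    intro β
    rw [show Real.sqrt |Sr m β| * (|Sr m β| * Real.sqrt |Sr m β|)
        = (Real.sqrt |Sr m β| * Real.sqrt |Sr m β|) * |Sr m β| by ring,
      Real.mul_self_sqrt (habs β), ← sq_abs]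
    ring
  have e2 : ∀ β : Fin m → Bool, Real.sqrt |Sr m β| ^ 2 = |Sr m β| := fun β =>
    Real.sq_sqrt (habs β)
  have e3 : ∀ β : Fin m → Bool,
      (|Sr m β| * Real.sqrt |Sr m β|) ^ 2 = |Sr m β| ^ 3 := by
    intro β
    rw [mul_pow, Real.sq_sqrt (habs β)]
    ring
  rw [Finset.sum_congr rfl (fun β _ => e1 β), Finset.sum_congr rfl (fun β _ => e2 β),
    Finset.sum_congr rfl (fun β _ => e3 β), M2] at cs1
  -- CS 2 : (Σ|S|³)² ≤ (Σ S²)(Σ S⁴)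
  have cs2 := Finset.sum_mul_sq_le_sq_mul_sq Finset.univ
    (fun β : Fin m → Bool => |Sr m β|) (fun β : Fin m → Bool => Sr m β ^ 2)
  have e4 : ∀ β : Fin m → Bool, |Sr m β| * Sr m β ^ 2 = |Sr m β| ^ 3 := by
    intro β
    rw [← sq_abs]
    ring
  have e5 : ∀ β : Fin m → Bool, (Sr m β ^ 2) ^ 2 = Sr m β ^ 4 := by intro β; ring
  simp only [sq_abs] at cs2
  rw [Finset.sum_congr rfl (fun β _ => e4 β), Finset.sum_congr rfl (fun β _ => e5 β),
    M2, M4] at cs2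
  set T : ℝ := Tm m with hT
  have hTnn : 0 ≤ T := Finset.sum_nonneg fun β _ => habs β
  set B : ℝ := ∑ β : Fin m → Bool, |Sr m β| ^ 3 with hB
  have hBnn : 0 ≤ B := Finset.sum_nonneg fun β _ => by positivity
  -- assemble
  have hA4 : (M * Q) ^ 4 ≤ T ^ 2 * (M * Q * ((3 * M ^ 2 - 2 * M) * Q)) := by
    have h1 : ((M * Q) ^ 2) ^ 2 ≤ (T * B) ^ 2 := by
      have hle : (M * Q) ^ 2 ≤ T * B := by
        calc (M*Q)^2 = (M * 2 ^ m)^2 := by rw [hQ]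
          _ ≤ T * B := cs1
      have hnn : (0:ℝ) ≤ (M * Q) ^ 2 := by positivity
      exact pow_le_pow_left₀ hnn hle 2
    calc (M*Q)^4 = ((M*Q)^2)^2 := by ring
      _ ≤ (T*B)^2 := h1
      _ = T^2 * B^2 := by ring
      _ ≤ T^2 * (M * Q * ((3 * M^2 - 2*M) * Q)) := by
          apply mul_le_mul_of_nonneg_left _ (by positivity)
          calc B^2 ≤ (M * 2^m) * ((3*M^2 - 2*M) * 2^m) := cs2
            _ = M * Q * ((3*M^2 - 2*M)*Q) := by rw [hQ]
  -- conclude : M * Q² / 3 ≤ T²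
  have hfin : M * Q ^ 2 * (M ^ 3 * Q ^ 2) ≤ 3 * T ^ 2 * (M ^ 3 * Q ^ 2) := by
    nlinarith [sq_nonneg T, sq_nonneg Q, mul_pos hQpos hQpos]
  have hpos : (0:ℝ) < M ^ 3 * Q ^ 2 := by positivity
  have := le_of_mul_le_mul_right hfin hpos
  have h4Q : (4:ℝ) ^ m = Q ^ 2 := by
    rw [hQ, ← pow_mul, mul_comm m 2, pow_mul]
    norm_num
  rw [h4Q]
  linarith

section NormPart

variable {d : ℕ} {N : (Fin d → ℝ) → ℝ}

lemma N_zero (hmul : ∀ (c : ℝ) (x : Fin d → ℝ), N (c • x) = |c| * N x) : N 0 = 0 := by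
  have := hmul 0 0
  simpa using this

lemma N_neg (hmul : ∀ (c : ℝ) (x : Fin d → ℝ), N (c • x) = |c| * N x)
    (x : Fin d → ℝ) : N (-x) = N x := by
  have := hmul (-1) x
  simpa using this

lemma N_nonneg (hadd : ∀ x y : Fin d → ℝ, N (x + y) ≤ N x + N y)
    (hmul : ∀ (c : ℝ) (x : Fin d → ℝ), N (c • x) = |c| * N x)
    (x : Fin d → ℝ) : 0 ≤ N x := by
  have h := hadd x (-x)
  rw [add_neg_cancel, N_zero hmul, N_neg hmul] at h
  linarith

lemma N_sum_le (hadd : ∀ x y : Fin d → ℝ, N (x + y) ≤ N x + N y)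
    (hmul : ∀ (c : ℝ) (x : Fin d → ℝ), N (c • x) = |c| * N x)
    {ι : Type*} (s : Finset ι) (v : ι → Fin d → ℝ) :
    N (∑ i ∈ s, v i) ≤ ∑ i ∈ s, N (v i) := by
  classical
  induction s using Finset.induction_on with
  | empty => simp [N_zero hmul]
  | insert _ _ hx ih =>
      rw [Finset.sum_insert hx, Finset.sum_insert hx]
      exact le_trans (hadd _ _) (by linarith)

/-- The key Jensen inequality for a single block of `m` copies. -/
lemma star (hadd : ∀ x y : Fin d → ℝ, N (x + y) ≤ N x + N y)
    (hmul : ∀ (c : ℝ) (x : Fin d → ℝ), N (c • x) = |c| * N x)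
    {m : ℕ} (hm : Odd m) (w z : Fin d → ℝ) :
    2 ^ m * (N (w + z) ^ 2 + N (w - z) ^ 2)
      ≤ 2 * ∑ β : Fin m → Bool, N (w + ((2 ^ m / Tm m) * Sr m β) • z) ^ 2 := by
  have hT := Tm_pos hm
  set c : ℝ := 2 ^ m / Tm m with hc
  set P : ℝ := ((Bpos m).card : ℝ) with hP
  have hPP : 2 * P = 2 ^ m := card_Bpos hm
  have hPpos : 0 < P := by
    have : (0:ℝ) < 2 ^ m := by positivity
    linarith
  -- positive block
  have hplus : P * N (w + z) ^ 2 ≤ ∑ β ∈ Bpos m, N (w + (c * Sr m β) • z) ^ 2 := by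
    have h1 : ∑ β ∈ Bpos m, (w + (c * Sr m β) • z) = P • (w + z) := by
      rw [Finset.sum_add_distrib, Finset.sum_const, ← Finset.sum_smul, ← Finset.mul_sum]
      have h2 : c * ∑ β ∈ Bpos m, Sr m β = P := by
        have := sum_Sr_Bpos hm
        rw [hc]
        field_simp
        nlinarith [this]
      rw [h2, smul_add]
      congr 1
      rw [← Nat.cast_smul_eq_nsmul ℝ]
    have h3 : N (∑ β ∈ Bpos m, (w + (c * Sr m β) • z)) = P * N (w + z) := by
      rw [h1, hmul, abs_of_pos hPpos]
    have h4 := N_sum_le hadd hmul (Bpos m) (fun β => w + (c * Sr m β) • z)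
    rw [h3] at h4
    have h5 := Finset.sum_mul_sq_le_sq_mul_sq (Bpos m)
      (fun β => N (w + (c * Sr m β) • z)) (fun _ => (1:ℝ))
    simp only [mul_one, one_pow, Finset.sum_const, nsmul_eq_mul, mul_one] at h5
    have h6 : (P * N (w + z)) ^ 2 ≤ (∑ β ∈ Bpos m, N (w + (c * Sr m β) • z)) ^ 2 := by
      have hnn : 0 ≤ P * N (w + z) := by
        have := N_nonneg hadd hmul (w + z)
        positivity
      exact pow_le_pow_left₀ hnn h4 2
    have h7 : (P * N (w+z))^2 ≤ (∑ β ∈ Bpos m, N (w + (c * Sr m β) • z) ^ 2) * P := h6.trans h5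
    nlinarith [h7, hPpos]
  -- negative block
  have hminus : P * N (w - z) ^ 2 ≤ ∑ β ∈ Bneg m, N (w + (c * Sr m β) • z) ^ 2 := by
    have h1 : ∑ β ∈ Bneg m, (w + (c * Sr m β) • z) = P • (w - z) := by
      rw [Finset.sum_add_distrib, Finset.sum_const, ← Finset.sum_smul, ← Finset.mul_sum]
      have hcard : (Bneg m).card = (Bpos m).card := by
        have h1 : ∑ β ∈ Bneg m, (1 : ℝ) = ∑ β ∈ Bpos m, (1 : ℝ) := by
          simpa using sum_Bneg hm (fun _ => (1 : ℝ))
        exact_mod_cast (by simpa using h1 : ((Bneg m).card : ℝ) = (Bpos m).card)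
      have h2 : c * ∑ β ∈ Bneg m, Sr m β = -P := by
        rw [sum_Sr_Bneg hm, hc]
        field_simp
        nlinarith [hPP]
      rw [h2, hcard, sub_eq_add_neg, smul_add]
      congr 1
      · rw [← Nat.cast_smul_eq_nsmul ℝ]
      · rw [neg_smul, smul_neg]
    have h3 : N (∑ β ∈ Bneg m, (w + (c * Sr m β) • z)) = P * N (w - z) := by
      rw [h1, hmul, abs_of_pos hPpos]
    have h4 := N_sum_le hadd hmul (Bneg m) (fun β => w + (c * Sr m β) • z)
    rw [h3] at h4
    have h5 := Finset.sum_mul_sq_le_sq_mul_sq (Bneg m)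
      (fun β => N (w + (c * Sr m β) • z)) (fun _ => (1:ℝ))
    simp only [mul_one, one_pow, Finset.sum_const, nsmul_eq_mul, mul_one] at h5
    have hcard : ((Bneg m).card : ℝ) = P := by
      have h1 : ∑ β ∈ Bneg m, (1 : ℝ) = ∑ β ∈ Bpos m, (1 : ℝ) := by
        simpa using sum_Bneg hm (fun _ => (1 : ℝ))
      have h2 : (Bneg m).card = (Bpos m).card := by simpa using h1
      rw [hP]
      exact_mod_cast h2
    rw [hcard] at h5
    have h6 : (P * N (w - z)) ^ 2 ≤ (∑ β ∈ Bneg m, N (w + (c * Sr m β) • z)) ^ 2 := by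
      have hnn : 0 ≤ P * N (w - z) := by
        have := N_nonneg hadd hmul (w - z)
        positivity
      exact pow_le_pow_left₀ hnn h4 2
    have h7 : (P * N (w-z))^2 ≤ (∑ β ∈ Bneg m, N (w + (c * Sr m β) • z) ^ 2) * P := h6.trans h5
    nlinarith [h7, hPpos]
  have hsplit := sum_split (fun β => N (w + (c * Sr m β) • z) ^ 2)
  rw [hsplit]
  nlinarith [hplus, hminus, hPP]

end NormPart

section RwPart

variable {d : ℕ}

/-- The Rademacher second moment, defined recursively over a list of vectors. -/
noncomputable def Rw (N : (Fin d → ℝ) → ℝ) : List (Fin d → ℝ) → (Fin d → ℝ) → ℝ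
  | [], w => N w ^ 2
  | z :: l, w => (Rw N l (w + z) + Rw N l (w - z)) / 2

/-- Sum of squared norms over a list. -/
noncomputable def SQ (N : (Fin d → ℝ) → ℝ) (l : List (Fin d → ℝ)) : ℝ :=
  (l.map fun z => N z ^ 2).sum

variable {N : (Fin d → ℝ) → ℝ}

lemma Rw_nonneg (l : List (Fin d → ℝ)) : ∀ w, 0 ≤ Rw N l w := by
  induction l with
  | nil => intro w; simp [Rw]; positivity
  | cons z l ih =>
      intro w
      simp only [Rw]
      have h1 := ih (w + z)
      have h2 := ih (w - z)
      linarith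

lemma SQ_nonneg (hadd : ∀ x y : Fin d → ℝ, N (x + y) ≤ N x + N y)
    (hmul : ∀ (c : ℝ) (x : Fin d → ℝ), N (c • x) = |c| * N x)
    (l : List (Fin d → ℝ)) : 0 ≤ SQ N l := by
  apply List.sum_nonneg
  intro a ha
  rw [List.mem_map] at ha
  obtain ⟨z, _, rfl⟩ := ha
  positivity

/-- Bridge between the `Fin n → Bool` average and the recursive `Rw`. -/
lemma bridge (n : ℕ) (x : Fin n → Fin d → ℝ) (w : Fin d → ℝ) :
    (∑ ε : Fin n → Bool, N (w + ∑ i, sgn (ε i) • x i) ^ 2) / 2 ^ n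
      = Rw N (List.ofFn x) w := by
  induction n generalizing w with
  | zero => simp [Rw, List.ofFn_zero]
  | succ n ih =>
      rw [sum_piFinSucc n (fun ε => N (w + ∑ i, sgn (ε i) • x i) ^ 2)]
      have hsum : ∀ (b : Bool) (β : Fin n → Bool),
          w + ∑ i : Fin (n+1), sgn ((Fin.cons b β : Fin (n+1) → Bool) i) • x i
            = (w + sgn b • x 0) + ∑ i : Fin n, sgn (β i) • x i.succ := by
        intro b β
        rw [Fin.sum_univ_succ]
        simp only [Fin.cons_zero, Fin.cons_succ]
        abel
      have hb : ∀ b : Bool,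
          (∑ β : Fin n → Bool, N (w + ∑ i : Fin (n+1), sgn ((Fin.cons b β : Fin (n+1) → Bool) i) • x i) ^ 2)
            = (2:ℝ) ^ n * Rw N (List.ofFn (fun i : Fin n => x i.succ)) (w + sgn b • x 0) := by
        intro b
        rw [← ih (fun i => x i.succ) (w + sgn b • x 0)]
        have h2 : (0:ℝ) < 2 ^ n := by positivity
        field_simp
        exact Finset.sum_congr rfl fun β _ => by rw [hsum b β]
      rw [Fintype.sum_bool, hb true, hb false, List.ofFn_succ, Rw]
      have : sgn true • x 0 = x 0 := by simp [sgn]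
      have hf : w + sgn false • x 0 = w - x 0 := by
        simp [sgn]
        abel
      rw [this, hf]
      rw [pow_succ]
      have h2 : (0:ℝ) < 2 ^ n := by positivity
      field_simp

lemma bridge0 (n : ℕ) (x : Fin n → Fin d → ℝ) :
    (∑ ε : Fin n → Bool, N (∑ i, sgn (ε i) • x i) ^ 2) / 2 ^ n
      = Rw N (List.ofFn x) 0 := by
  rw [← bridge n x 0]
  congr 1
  exact Finset.sum_congr rfl fun ε _ => by rw [zero_add]

lemma SQ_ofFn (n : ℕ) (x : Fin n → Fin d → ℝ) :
    SQ N (List.ofFn x) = ∑ i, N (x i) ^ 2 := by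
  rw [SQ, List.map_ofFn, List.sum_ofFn]
  rfl

/-- Remove zero vectors. -/
lemma remove_zeros (hmul : ∀ (c : ℝ) (x : Fin d → ℝ), N (c • x) = |c| * N x)
    (l : List (Fin d → ℝ)) :
    ∃ l' : List (Fin d → ℝ), (∀ z ∈ l', z ≠ 0) ∧ (∀ w, Rw N l' w = Rw N l w) ∧
      SQ N l' = SQ N l := by
  induction l with
  | nil => exact ⟨[], by simp, fun w => rfl, rfl⟩
  | cons z l ih =>
      obtain ⟨l', h1, h2, h3⟩ := ih
      by_cases hz : z = 0
      · refine ⟨l', h1, fun w => ?_, ?_⟩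
        · rw [Rw, hz, add_zero, sub_zero, h2]
          ring
        · have hz2 : N z ^ 2 = 0 := by
            rw [hz, N_zero hmul]
            ring
          rw [h3, SQ, SQ, List.map_cons, List.sum_cons, hz2, zero_add]
      · refine ⟨z :: l', fun u hu => ?_, fun w => ?_, ?_⟩
        · rcases List.mem_cons.mp hu with h | h
          · rw [h]; exact hz
          · exact h1 u h
        · rw [Rw, Rw, h2, h2]
        · rw [SQ, SQ, List.map_cons, List.map_cons, List.sum_cons, List.sum_cons, ← SQ, ← SQ, h3]

/-- Scaling a list. -/
lemma Rw_smul (hmul : ∀ (c : ℝ) (x : Fin d → ℝ), N (c • x) = |c| * N x)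
    (a : ℝ) (l : List (Fin d → ℝ)) :
    ∀ w, Rw N (l.map fun z => a • z) (a • w) = a ^ 2 * Rw N l w := by
  induction l with
  | nil =>
      intro w
      simp only [List.map_nil, Rw, hmul]
      rw [mul_pow, sq_abs]
  | cons z l ih =>
      intro w
      simp only [List.map_cons, Rw]
      rw [← smul_add, ← smul_sub, ih (w + z), ih (w - z)]
      ring

lemma SQ_smul (hmul : ∀ (c : ℝ) (x : Fin d → ℝ), N (c • x) = |c| * N x)
    (a : ℝ) (l : List (Fin d → ℝ)) :
    SQ N (l.map fun z => a • z) = a ^ 2 * SQ N l := by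
  induction l with
  | nil => simp [SQ]
  | cons z l ih =>
      simp only [SQ, List.map_cons, List.sum_cons, List.map_map] at ih ⊢
      rw [hmul, mul_pow, sq_abs, ih]
      ring

/-- Unfolding `Rw` over `m` identical copies at the head. -/
lemma rep_unfold (m : ℕ) (v : Fin d → ℝ) (l : List (Fin d → ℝ)) :
    ∀ w, Rw N (List.replicate m v ++ l) w
      = (∑ β : Fin m → Bool, Rw N l (w + Sr m β • v)) / 2 ^ m := by
  induction m with
  | zero =>
      intro w
      have : ∀ β : Fin 0 → Bool, Sr 0 β = 0 := fun β => by simp [Sr]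
      simp [this]
  | succ m ih =>
      intro w
      rw [List.replicate_succ, List.cons_append, Rw, ih (w + v), ih (w - v),
        sum_piFinSucc m (fun β => Rw N l (w + Sr (m+1) β • v))]
      have hb : ∀ (b : Bool) (β : Fin m → Bool),
          w + Sr (m+1) (Fin.cons b β) • v = (w + sgn b • v) + Sr m β • v := by
        intro b β
        rw [Sr_cons, add_smul]
        abel
      have h1 : ∀ b : Bool, ∑ β : Fin m → Bool, Rw N l (w + Sr (m+1) (Fin.cons b β) • v)
          = ∑ β : Fin m → Bool, Rw N l ((w + sgn b • v) + Sr m β • v) :=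
        fun b => Finset.sum_congr rfl fun β _ => by rw [hb b β]
      rw [Fintype.sum_bool, h1 true, h1 false]
      have ht : sgn true • v = v := by simp [sgn]
      have hf : w + sgn false • v = w - v := by simp [sgn]; abel
      rw [ht, hf]
      ring

end RwPart

section ExpandPart

variable {d : ℕ} {N : (Fin d → ℝ) → ℝ}

lemma lift_star (hadd : ∀ x y : Fin d → ℝ, N (x + y) ≤ N x + N y)
    (hmul : ∀ (c : ℝ) (x : Fin d → ℝ), N (c • x) = |c| * N x)
    {m : ℕ} (hm : Odd m) (z : Fin d → ℝ) (l : List (Fin d → ℝ)) :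
    ∀ w, 2 ^ m * (Rw N l (w + z) + Rw N l (w - z))
      ≤ 2 * ∑ β : Fin m → Bool, Rw N l (w + ((2 ^ m / Tm m) * Sr m β) • z) := by
  induction l with
  | nil =>
      intro w
      simpa [Rw] using star hadd hmul hm w z
  | cons z' l ih =>
      intro w
      have h1 := ih (w + z')
      have h2 := ih (w - z')
      rw [show w + z' + z = (w + z) + z' by abel, show w + z' - z = (w - z) + z' by abel] at h1
      rw [show w - z' + z = (w + z) - z' by abel, show w - z' - z = (w - z) - z' by abel] at h2
      have h1' : ∀ β : Fin m → Bool,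
          w + z' + ((2 ^ m / Tm m) * Sr m β) • z
            = (w + ((2 ^ m / Tm m) * Sr m β) • z) + z' := fun β => by abel
      have h2' : ∀ β : Fin m → Bool,
          w - z' + ((2 ^ m / Tm m) * Sr m β) • z
            = (w + ((2 ^ m / Tm m) * Sr m β) • z) - z' := fun β => by abel
      simp only [h1'] at h1
      simp only [h2'] at h2
      simp only [Rw]
      rw [← Finset.sum_div, Finset.sum_add_distrib]
      linarith

lemma block_step (hadd : ∀ x y : Fin d → ℝ, N (x + y) ≤ N x + N y)
    (hmul : ∀ (c : ℝ) (x : Fin d → ℝ), N (c • x) = |c| * N x)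
    {m : ℕ} (hm : Odd m) (z : Fin d → ℝ) (l : List (Fin d → ℝ)) (w : Fin d → ℝ) :
    Rw N (z :: l) w ≤ Rw N (List.replicate m ((2 ^ m / Tm m) • z) ++ l) w := by
  rw [rep_unfold, Rw]
  have he : ∀ β : Fin m → Bool,
      w + Sr m β • ((2 ^ m / Tm m) • z) = w + ((2 ^ m / Tm m) * Sr m β) • z := by
    intro β
    rw [smul_smul, mul_comm]
  rw [Finset.sum_congr rfl fun β _ => by rw [he β]]
  have key := lift_star hadd hmul hm z l w
  have h2 : (0:ℝ) < 2 ^ m := by positivity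
  rw [div_le_div_iff₀ (by norm_num) h2]
  linarith

lemma Rw_append_mono {l₁ l₂ : List (Fin d → ℝ)}
    (h : ∀ w, Rw N l₁ w ≤ Rw N l₂ w) (s : List (Fin d → ℝ)) :
    ∀ w, Rw N (s ++ l₁) w ≤ Rw N (s ++ l₂) w := by
  induction s with
  | nil => exact h
  | cons u s ih =>
      intro w
      simp only [List.cons_append, Rw, List.append_eq]
      have h1 := ih (w + u)
      have h2 := ih (w - u)
      linarith

lemma SQ_append (l₁ l₂ : List (Fin d → ℝ)) : SQ N (l₁ ++ l₂) = SQ N l₁ + SQ N l₂ := by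
  simp [SQ]

lemma SQ_replicate (m : ℕ) (v : Fin d → ℝ) :
    SQ N (List.replicate m v) = m * N v ^ 2 := by
  simp [SQ, List.map_replicate, List.sum_replicate, nsmul_eq_mul]

lemma exists_odd_window {a : ℝ} (ha : Real.sqrt 2 ≤ a) :
    ∃ m : ℕ, Odd m ∧ 3 * a ^ 2 ≤ m ∧ (m : ℝ) < 4 * a ^ 2 := by
  have ha2 : 2 ≤ a ^ 2 := by
    have h0 : (0:ℝ) ≤ a := le_trans (Real.sqrt_nonneg 2) ha
    nlinarith [Real.sq_sqrt (by norm_num : (0:ℝ) ≤ 2), Real.sqrt_nonneg 2]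
  set k := ⌈3 * a ^ 2⌉₊ with hk
  have hk1 : 3 * a ^ 2 ≤ (k : ℝ) := Nat.le_ceil _
  have hk2 : (k : ℝ) < 3 * a ^ 2 + 1 := by
    apply Nat.ceil_lt_add_one
    positivity
  rcases Nat.even_or_odd k with he | ho
  · refine ⟨k + 1, Even.add_one he, ?_, ?_⟩
    · push_cast
      linarith
    · push_cast
      linarith
  · exact ⟨k, ho, hk1, by linarith⟩

/-- The expansion lemma: replace each vector by an equalizing block of copies. -/
lemma expansion (hadd : ∀ x y : Fin d → ℝ, N (x + y) ≤ N x + N y)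
    (hmul : ∀ (c : ℝ) (x : Fin d → ℝ), N (c • x) = |c| * N x)
    (l : List (Fin d → ℝ)) (hl : ∀ z ∈ l, Real.sqrt 2 ≤ N z) :
    ∃ L : List (Fin d → ℝ), (∀ u ∈ L, 1/2 < N u ∧ N u ≤ 1) ∧
      SQ N L ≤ 3 * SQ N l ∧ ∀ w, Rw N l w ≤ Rw N L w := by
  induction l with
  | nil =>
      refine ⟨[], by simp, by simp [SQ], fun w => le_refl _⟩
  | cons z l ih =>
      obtain ⟨L₁, hN₁, hSQ₁, hR₁⟩ := ih (fun u hu => hl u (List.mem_cons_of_mem z hu))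
      have haz : Real.sqrt 2 ≤ N z := hl z List.mem_cons_self
      set a := N z with hadef
      have hapos : 0 < a := lt_of_lt_of_le (by positivity) haz
      obtain ⟨m, hm, hm1, hm2⟩ := exists_odd_window haz
      have hmpos : 0 < m := hm.pos
      set c : ℝ := 2 ^ m / Tm m with hc
      have h2m : (0:ℝ) < 2 ^ m := by positivity
      have hcpos : 0 < c := by
        rw [hc]
        exact div_pos h2m (Tm_pos hm)
      have hT2pos : 0 < Tm m ^ 2 := pow_pos (Tm_pos hm) 2
      have h4Q : ((2:ℝ) ^ m) ^ 2 = 4 ^ m := by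
        rw [← pow_mul, mul_comm m 2, pow_mul]
        norm_num
      have hc2m : c ^ 2 * m = (m * 4 ^ m) / Tm m ^ 2 := by
        rw [hc]
        field_simp
        rw [h4Q]
      have hc2_low : 1 ≤ c ^ 2 * m := by
        rw [hc2m, le_div_iff₀ hT2pos, one_mul]
        exact Tm_sq_le m
      have hc2_high : c ^ 2 * m ≤ 3 := by
        rw [hc2m, div_le_iff₀ hT2pos]
        have := Tm_sq_ge hmpos
        linarith
      have hca : N (c • z) = c * a := by rw [hmul, abs_of_pos hcpos]
      have hmr : (0:ℝ) < m := by exact_mod_cast hmpos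
      have hup : c ^ 2 * m * a ^ 2 ≤ 3 * a ^ 2 :=
        mul_le_mul_of_nonneg_right hc2_high (sq_nonneg a)
      have hdown : 1 * a ^ 2 ≤ c ^ 2 * m * a ^ 2 :=
        mul_le_mul_of_nonneg_right hc2_low (sq_nonneg a)
      have hblock : (c * a) ^ 2 * m ≤ 3 * a ^ 2 := by
        calc (c * a) ^ 2 * m = c ^ 2 * m * a ^ 2 := by ring
          _ ≤ 3 * a ^ 2 := hup
      have hca_sq_le : (c * a) ^ 2 ≤ 1 := by
        have h2 : (c * a) ^ 2 * m ≤ 1 * m := by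
          rw [one_mul]
          exact hblock.trans hm1
        exact le_of_mul_le_mul_right h2 hmr
      have hca_sq_gt : 1 / 4 < (c * a) ^ 2 := by
        have h3 : (1 / 4) * m < (c * a) ^ 2 * m := by
          have e : (c * a) ^ 2 * m = c ^ 2 * m * a ^ 2 := by ring
          rw [e]
          linarith
        exact lt_of_mul_lt_mul_right h3 (le_of_lt hmr)
      have hcann : 0 ≤ c * a := le_of_lt (mul_pos hcpos hapos)
      have hca_le : c * a ≤ 1 := by
        rw [← pow_le_one_iff_of_nonneg hcann (two_ne_zero)]
        exact hca_sq_le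
      have hca_gt : 1 / 2 < c * a := by
        have h4 : (1/2 : ℝ) ^ 2 < (c * a) ^ 2 := by
          norm_num
          linarith
        exact lt_of_pow_lt_pow_left₀ 2 hcann h4
      refine ⟨List.replicate m (c • z) ++ L₁, ?_, ?_, ?_⟩
      · intro u hu
        rcases List.mem_append.mp hu with h | h
        · rw [List.eq_of_mem_replicate h, hca]
          exact ⟨hca_gt, hca_le⟩
        · exact hN₁ u h
      · rw [SQ_append, SQ_replicate, hca]
        have hblock' : (m : ℝ) * (c * a) ^ 2 ≤ 3 * a ^ 2 := by
          calc (m : ℝ) * (c * a) ^ 2 = (c * a) ^ 2 * m := by ring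
            _ ≤ 3 * a ^ 2 := hblock
        have hSQcons : SQ N (z :: l) = a ^ 2 + SQ N l := by
          rw [SQ, List.map_cons, List.sum_cons, ← SQ, hadef]
        rw [hSQcons]
        linarith [hblock', hSQ₁]
      · intro w
        calc Rw N (z :: l) w ≤ Rw N (List.replicate m (c • z) ++ l) w :=
              block_step hadd hmul hm z l w
          _ ≤ Rw N (List.replicate m (c • z) ++ L₁) w :=
              Rw_append_mono hR₁ (List.replicate m (c • z)) w


end ExpandPart

/-- There is an absolute constant `C > 0` such that for any normed space
`X = (ℝ^d, N)` and any real `t` with `0 < t < T₂(X)` (equivalently, `t > 0` fails to be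
a valid type-2 constant for `X`), there exist `n` and vectors `x₁, …, x_n` with
`1 ≤ N xᵢ ≤ 2` for all `i` and
`(𝔼_ε ‖Σᵢ εᵢxᵢ‖²)^{1/2} ≥ (t/C)·(Σᵢ ‖xᵢ‖²)^{1/2}`. -/
theorem stmt_3 : ∃ C : ℝ, 0 < C ∧
    ∀ (d : ℕ) (N : (Fin d → ℝ) → ℝ),
    (∀ x y : Fin d → ℝ, N (x + y) ≤ N x + N y) →
    (∀ (c : ℝ) (x : Fin d → ℝ), N (c • x) = |c| * N x) →
    (∀ x : Fin d → ℝ, x ≠ 0 → 0 < N x) →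
    ∀ t : ℝ, 0 < t →
    -- `t < T₂(X)`: the type-2 inequality with constant `t` fails for some sequence
    (¬ ∀ (n : ℕ) (x : Fin n → Fin d → ℝ),
        Real.sqrt ((∑ ε : Fin n → Bool, N (∑ i, sgn (ε i) • x i) ^ 2) / 2 ^ n)
          ≤ t * Real.sqrt (∑ i, N (x i) ^ 2)) →
    ∃ (n : ℕ) (x : Fin n → Fin d → ℝ),
      (∀ i, 1 ≤ N (x i) ∧ N (x i) ≤ 2) ∧
      (t / C) * Real.sqrt (∑ i, N (x i) ^ 2)
        ≤ Real.sqrt ((∑ ε : Fin n → Bool, N (∑ i, sgn (ε i) • x i) ^ 2) / 2 ^ n) := by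
  refine ⟨2, by norm_num, ?_⟩
  intro d N hadd hmul hpos t ht hfail
  push_neg at hfail
  obtain ⟨n₀, x₀, hx₀⟩ := hfail
  rw [bridge0 n₀ x₀] at hx₀
  rw [show (∑ i, N (x₀ i) ^ 2) = SQ N (List.ofFn x₀) from (SQ_ofFn n₀ x₀).symm] at hx₀
  set l : List (Fin d → ℝ) := List.ofFn x₀ with hl
  -- remove zero vectors
  obtain ⟨l', hl'ne, hl'R, hl'SQ⟩ := remove_zeros hmul l
  rw [← hl'R 0, ← hl'SQ] at hx₀
  -- l' is nonempty
  have hl'nonempty : l' ≠ [] := by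
    intro hnil
    rw [hnil] at hx₀
    have h1 : Rw N ([] : List (Fin d → ℝ)) 0 = 0 := by
      simp [Rw, N_zero hmul]
    rw [h1, Real.sqrt_zero] at hx₀
    have h2 : 0 ≤ t * Real.sqrt (SQ N ([] : List (Fin d → ℝ))) := by
      apply mul_nonneg (le_of_lt ht) (Real.sqrt_nonneg _)
    linarith
  have hzpos : ∀ z ∈ l', 0 < N z := fun z hz => hpos z (hl'ne z hz)
  -- rescale so that all norms are at least √2
  set lam : ℝ := Real.sqrt 2 * (l'.map fun z => (N z)⁻¹).sum with hlam
  have hsumpos : 0 < (l'.map fun z => (N z)⁻¹).sum := by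
    apply List.sum_pos
    · intro a ha
      rw [List.mem_map] at ha
      obtain ⟨z, hz, rfl⟩ := ha
      exact inv_pos.mpr (hzpos z hz)
    · intro hnil
      apply hl'nonempty
      exact List.map_eq_nil_iff.mp hnil
  have hlampos : 0 < lam := by
    rw [hlam]
    have : (0:ℝ) < Real.sqrt 2 := by positivity
    exact mul_pos this hsumpos
  have hlam_ge : ∀ z ∈ l', Real.sqrt 2 ≤ lam * N z := by
    intro z hz
    have hinv : (N z)⁻¹ ≤ (l'.map fun z => (N z)⁻¹).sum := by
      apply List.single_le_sum
      · intro a ha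
        rw [List.mem_map] at ha
        obtain ⟨u, hu, rfl⟩ := ha
        exact le_of_lt (inv_pos.mpr (hzpos u hu))
      · exact List.mem_map_of_mem hz
    have hNz := hzpos z hz
    have h2 : Real.sqrt 2 * ((N z)⁻¹ * N z) ≤ Real.sqrt 2 * ((l'.map fun z => (N z)⁻¹).sum * N z) := by
      apply mul_le_mul_of_nonneg_left _ (Real.sqrt_nonneg 2)
      exact mul_le_mul_of_nonneg_right hinv (le_of_lt hNz)
    rw [inv_mul_cancel₀ (ne_of_gt hNz), mul_one] at h2
    calc Real.sqrt 2 ≤ Real.sqrt 2 * ((l'.map fun z => (N z)⁻¹).sum * N z) := h2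
      _ = lam * N z := by rw [hlam]; ring
  set l₁ : List (Fin d → ℝ) := l'.map (fun z => lam • z) with hl₁
  have hl₁norm : ∀ z ∈ l₁, Real.sqrt 2 ≤ N z := by
    intro z hz
    rw [hl₁, List.mem_map] at hz
    obtain ⟨u, hu, rfl⟩ := hz
    rw [hmul, abs_of_pos hlampos]
    exact hlam_ge u hu
  have hRl₁ : Rw N l₁ 0 = lam ^ 2 * Rw N l' 0 := by
    have := Rw_smul hmul lam l' 0
    rw [smul_zero] at this
    rw [hl₁]
    exact this
  have hSQl₁ : SQ N l₁ = lam ^ 2 * SQ N l' := by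
    rw [hl₁]
    exact SQ_smul hmul lam l'
  -- expand
  obtain ⟨L, hLnorm, hLSQ, hLR⟩ := expansion hadd hmul l₁ hl₁norm
  set L₂ : List (Fin d → ℝ) := L.map (fun z => (2:ℝ) • z) with hL₂
  have hRL₂ : Rw N L₂ 0 = 4 * Rw N L 0 := by
    have := Rw_smul hmul 2 L 0
    rw [smul_zero] at this
    rw [hL₂, this]
    norm_num
  have hSQL₂ : SQ N L₂ = 4 * SQ N L := by
    rw [hL₂, SQ_smul hmul 2 L]
    norm_num
  have hL₂norm : ∀ u ∈ L₂, 1 ≤ N u ∧ N u ≤ 2 := by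
    intro u hu
    rw [hL₂, List.mem_map] at hu
    obtain ⟨v, hv, rfl⟩ := hu
    rw [hmul]
    have h12 := hLnorm v hv
    rw [show |(2:ℝ)| = 2 by norm_num]
    constructor <;> linarith [h12.1, h12.2]
  -- numeric chain
  have hSQl₁nn : 0 ≤ SQ N l₁ := SQ_nonneg hadd hmul l₁
  have hRwl₁nn : 0 ≤ Rw N l₁ 0 := Rw_nonneg l₁ 0
  have hstep1 : t ^ 2 * SQ N l₁ ≤ Rw N l₁ 0 := by
    have h1 : t * Real.sqrt (SQ N l₁) < Real.sqrt (Rw N l₁ 0) := by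
      have e1 : Real.sqrt (SQ N l₁) = lam * Real.sqrt (SQ N l') := by
        rw [hSQl₁, Real.sqrt_mul (sq_nonneg lam), Real.sqrt_sq (le_of_lt hlampos)]
      have e2 : Real.sqrt (Rw N l₁ 0) = lam * Real.sqrt (Rw N l' 0) := by
        rw [hRl₁, Real.sqrt_mul (sq_nonneg lam), Real.sqrt_sq (le_of_lt hlampos)]
      rw [e1, e2]
      calc t * (lam * Real.sqrt (SQ N l')) = lam * (t * Real.sqrt (SQ N l')) := by ring
        _ < lam * Real.sqrt (Rw N l' 0) := by
            exact mul_lt_mul_of_pos_left hx₀ hlampos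
    have h2 : (t * Real.sqrt (SQ N l₁)) ^ 2 ≤ Real.sqrt (Rw N l₁ 0) ^ 2 := by
      apply pow_le_pow_left₀ _ (le_of_lt h1) 2
      exact mul_nonneg (le_of_lt ht) (Real.sqrt_nonneg _)
    rw [mul_pow, Real.sq_sqrt hSQl₁nn, Real.sq_sqrt hRwl₁nn] at h2
    exact h2
  have hSQLnn : 0 ≤ SQ N L := SQ_nonneg hadd hmul L
  have hmain : t ^ 2 / 4 * SQ N L₂ ≤ Rw N L₂ 0 := by
    have h3 : Rw N l₁ 0 ≤ Rw N L 0 := hLR 0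
    have h4 : t ^ 2 * (SQ N L / 3) ≤ t ^ 2 * SQ N l₁ := by
      apply mul_le_mul_of_nonneg_left _ (sq_nonneg t)
      linarith
    rw [hRL₂, hSQL₂]
    calc t ^ 2 / 4 * (4 * SQ N L) = t ^ 2 * SQ N L := by ring
      _ ≤ 3 * (t ^ 2 * (SQ N L / 3)) := by ring_nf; rfl
      _ ≤ 3 * (t ^ 2 * SQ N l₁) := by linarith
      _ ≤ 4 * (t ^ 2 * SQ N l₁) := by nlinarith [sq_nonneg t, hSQl₁nn]
      _ ≤ 4 * Rw N l₁ 0 := by linarith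
      _ ≤ 4 * Rw N L 0 := by linarith
  -- final witnesses
  refine ⟨L₂.length, L₂.get, ?_, ?_⟩
  · intro i
    exact hL₂norm (L₂.get i) (L₂.get_mem i)
  · rw [bridge0 L₂.length L₂.get, show List.ofFn L₂.get = L₂ from List.ofFn_get L₂]
    rw [show (∑ i, N (L₂.get i) ^ 2) = SQ N (List.ofFn L₂.get) from (SQ_ofFn _ _).symm,
      show List.ofFn L₂.get = L₂ from List.ofFn_get L₂]
    have e3 : t / 2 * Real.sqrt (SQ N L₂) = Real.sqrt ((t/2)^2 * SQ N L₂) := by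
      rw [Real.sqrt_mul (sq_nonneg _), Real.sqrt_sq (by positivity : (0:ℝ) ≤ t/2)]
    rw [e3]
    apply Real.sqrt_le_sqrt
    calc (t/2)^2 * SQ N L₂ = t^2/4 * SQ N L₂ := by ring
      _ ≤ Rw N L₂ 0 := hmain
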